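/- Let T be a 4-Steiner root of a graph G, let X be a clique-intersection of G, and let S ⊆ X be a minimal separator of G with S ⊊ X. If T⟨S⟩ is a star that is not a single edge (diam(T⟨S⟩) = 2), then there exists a node c at distance at most 1 from the center of T⟨X⟩ in T such that Real(N_T[c]) = S, namely c is the center of T⟨S⟩. -/

import Mathlib

noncomputable def setEcc {V : Type*} (T : SimpleGraph V) (S : Set V) (v : V) : ℕ :=
  sSup {d | ∃ u ∈ S, T.dist v u = d}

noncomputable def setDiam {V : Type*} (T : SimpleGraph V) (S : Set V) : ℕ :=
  sSup {d | ∃ u ∈ S, ∃ w ∈ S, T.dist u w = d}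

noncomputable def setRad {V : Type*} (T : SimpleGraph V) (S : Set V) : ℕ :=
  sInf {e | ∃ v ∈ S, setEcc T S v = e}

noncomputable def setCenter {V : Type*} (T : SimpleGraph V) (S : Set V) : Set V :=
  {v ∈ S | setEcc T S v = setRad T S}

/-- `T` is a `k`-Steiner root of `G` (via the injection `f` of the vertices of
`G` into the nodes of `T`): `T` is a tree and two distinct vertices of `G` are
adjacent iff their images are at distance at most `k` in `T`. -/
def IsSteinerRoot (k : ℕ) {α β : Type*} (G : SimpleGraph α) (T : SimpleGraph β)
    (f : α → β) : Prop :=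
  Function.Injective f ∧ T.IsTree ∧
    ∀ u v : α, u ≠ v → (G.Adj u v ↔ T.dist (f u) (f v) ≤ k)

/-- The vertex set of the smallest subtree of the tree `T` containing `X`:
all nodes lying on a path between two elements of `X`. -/
def span {β : Type*} (T : SimpleGraph β) (X : Set β) : Set β :=
  {w | ∃ u ∈ X, ∃ v ∈ X, ∃ p : T.Walk u v, p.IsPath ∧ w ∈ p.support}

def IsMaxClique {α : Type*} (G : SimpleGraph α) (K : Set α) : Prop :=
  G.IsClique K ∧ ∀ K', G.IsClique K' → K ⊆ K' → K' = K

/-- `X` is the intersection of a nonempty family of maximal cliques of `G`. -/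
def IsCliqueIntersection {α : Type*} (G : SimpleGraph α) (X : Set α) : Prop :=
  ∃ 𝒦 : Set (Set α), 𝒦.Nonempty ∧ (∀ K ∈ 𝒦, IsMaxClique G K) ∧ X = ⋂₀ 𝒦

def IsUVSep {α : Type*} (G : SimpleGraph α) (S : Set α) (u v : α) : Prop :=
  u ∉ S ∧ v ∉ S ∧ ∀ p : G.Walk u v, ∃ w ∈ p.support, w ∈ S

def IsMinSep {α : Type*} (G : SimpleGraph α) (S : Set α) : Prop :=
  ∃ u v : α, u ≠ v ∧ ¬ G.Adj u v ∧ IsUVSep G S u v ∧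
    ∀ S' ⊂ S, ¬ IsUVSep G S' u v

/-!
Let `x = f s₁` and `y = f s₂` realise the diameter `2` of `T⟨S⟩` and let `c` be their common
neighbour. In a tree, the midpoint of a diametral pair of real vertices is a center of the span,
so `c` is the center of `T⟨S⟩`. Since `X` is a clique, its real vertices are pairwise within
distance `4`, hence within `3` of `c`, which forces `c` to be at distance at most `1` from one
of the midpoints of a diametral pair of `T⟨X⟩`.

For `Real(N_T[c]) = S`, suppose `dist c (f a) ≤ 1` with `a ∉ S`. Each of the two full components
of the minimal separator `S` contains neighbours of `s₁` and of `s₂`, which lie in the two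
different branches of `T` at `c` through `x` and `y`. A component staying at distance `≥ 4`
from `c` could not pass from one branch to the other, since adjacent vertices have images within
distance `4`; so both components contain a vertex within `4` of `f a`, and `a` joins them
outside `S`.
-/

namespace SimpleGraph

variable {V : Type*} {G : SimpleGraph V} {a b c m m' p q u v w x y : V}

def Between (G : SimpleGraph V) (a w b : V) : Prop :=
  G.dist a w + G.dist w b = G.dist a b

lemma Between.symm (h : G.Between a w b) : G.Between b w a := by
  unfold Between at *
  rw [dist_comm (u := b), dist_comm (u := w) (v := a), dist_comm (u := b)]
  omega

lemma Between.trans_right (hG : G.Connected) (h₁ : G.Between a m c) (h₂ : G.Between m x c) :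
    G.Between a x c := by
  have := hG.dist_triangle (u := a) (v := m) (w := x)
  have := hG.dist_triangle (u := a) (v := x) (w := c)
  unfold Between at *
  omega

lemma Between.right_of_left (hG : G.Connected) (h₁ : G.Between a m c) (h₂ : G.Between a x m) :
    G.Between x m c := by
  have := hG.dist_triangle (u := x) (v := m) (w := c)
  have := hG.dist_triangle (u := a) (v := x) (w := c)
  unfold Between at *
  omega

lemma between_of_mem_support {q : G.Walk a b} (hq : q.length = G.dist a b) (hw : w ∈ q.support) :
    G.Between a w b := by
  classical
  have h₁ := length_eq_dist_of_subwalk hq (q.isSubwalk_takeUntil hw)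
  have h₂ := length_eq_dist_of_subwalk hq (q.isSubwalk_dropUntil hw)
  have := congrArg Walk.length (q.take_spec hw)
  rw [Walk.length_append] at this
  unfold Between
  omega

lemma Connected.exists_between_dist_eq (hG : G.Connected) {t : ℕ} (ht : t ≤ G.dist a b) :
    ∃ m, G.dist a m = t ∧ G.Between a m b := by
  obtain ⟨q, hq⟩ := hG.exists_walk_length_eq_dist a b
  have h₁ := length_eq_dist_of_subwalk hq (q.isSubwalk_take t)
  have h₂ := length_eq_dist_of_subwalk hq (q.isSubwalk_drop t)
  rw [Walk.take_length] at h₁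
  rw [Walk.drop_length] at h₂
  refine ⟨q.getVert t, by omega, ?_⟩
  unfold Between
  omega

lemma Walk.IsPath.append_of_inter {q : G.Walk a m} {r : G.Walk m b} (hq : q.IsPath)
    (hr : r.IsPath) (h : ∀ z ∈ q.support, z ∈ r.support → z = m) : (q.append r).IsPath := by
  rw [Walk.isPath_def, Walk.support_append, List.nodup_append]
  have hr' := hr.support_nodup
  rw [← r.cons_tail_support, List.nodup_cons] at hr'
  refine ⟨hq.support_nodup, hr'.2, fun z hzq z' hzr hzz => ?_⟩
  subst hzz
  have hzr' : z ∈ r.support := List.mem_of_mem_tail hzr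
  obtain rfl := h z hzq hzr'
  rw [← r.cons_tail_support] at hzr
  exact hr'.1 hzr

namespace IsTree

variable (hG : G.IsTree)
include hG

lemma length_eq_dist {q : G.Walk a b} (hq : q.IsPath) : q.length = G.dist a b := by
  obtain ⟨r, hr, hrl⟩ := hG.connected.exists_path_of_dist a b
  rw [← hrl, Subtype.mk.inj ((hG.isAcyclic.subsingleton_path a b).elim ⟨q, hq⟩ ⟨r, hr⟩)]

lemma between_of_mem_support {q : G.Walk a b} (hq : q.IsPath) (hw : w ∈ q.support) :
    G.Between a w b :=
  SimpleGraph.between_of_mem_support (hG.length_eq_dist hq) hw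

lemma mem_support_of_between (h : G.Between a w b) {q : G.Walk a b} (hq : q.IsPath) :
    w ∈ q.support := by
  obtain ⟨q₁, hq₁, hl₁⟩ := hG.connected.exists_path_of_dist a w
  obtain ⟨q₂, hq₂, hl₂⟩ := hG.connected.exists_path_of_dist w b
  have hpath : (q₁.append q₂).IsPath := by
    refine (q₁.append q₂).isPath_of_length_eq_dist ?_
    rw [Walk.length_append, hl₁, hl₂]
    exact h
  rw [Subtype.mk.inj ((hG.isAcyclic.subsingleton_path a b).elim ⟨q, hq⟩ ⟨_, hpath⟩)]
  exact Walk.support_subset_support_append_left _ _ q₁.end_mem_support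

lemma between_total (hb : G.Between a b p) (hc : G.Between a c p) :
    G.Between a b c ∨ G.Between a c b := by
  classical
  obtain ⟨q, hq, -⟩ := hG.connected.exists_path_of_dist a p
  have hbq := hG.mem_support_of_between hb hq
  have hcq := hG.mem_support_of_between hc hq
  rw [← q.take_spec hbq, Walk.mem_support_append_iff] at hcq
  rcases hcq with hcq | hcq
  · exact Or.inr (hG.between_of_mem_support (hq.takeUntil hbq) hcq)
  · exact Or.inl (hb.symm.right_of_left hG.connected
      (hG.between_of_mem_support (hq.dropUntil hbq) hcq).symm).symm

lemma exists_median (a b c : V) :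
    ∃ m, G.Between a m b ∧ G.Between a m c ∧ G.Between b m c := by
  classical
  obtain ⟨q, hq, -⟩ := hG.connected.exists_path_of_dist b c
  obtain ⟨m, hm, hmin⟩ := q.support.toFinset.exists_min_image (G.dist a) ⟨b, by simp⟩
  rw [List.mem_toFinset] at hm
  obtain ⟨r, hr, hrl⟩ := hG.connected.exists_path_of_dist a m
  -- a geodesic from `a` to the point of `q` closest to `a` meets `q` only at that point
  have hext : ∀ {e} (s : G.Walk m e), s.IsPath → (∀ z ∈ s.support, z ∈ q.support) →
      G.Between a m e := by
    intro e s hs hsq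
    have hpath := hr.append_of_inter hs fun z hzr hzs => by
      have h₁ := hG.between_of_mem_support hr hzr
      have h₂ := hmin z (List.mem_toFinset.mpr (hsq z hzs))
      unfold Between at h₁
      exact hG.connected.dist_eq_zero_iff.mp (by omega)
    have := hG.length_eq_dist hpath
    rwa [Walk.length_append, hrl, hG.length_eq_dist hs] at this
  refine ⟨m, hext _ (hq.takeUntil hm).reverse ?_, hext _ (hq.dropUntil hm)
    (fun z hz => q.support_dropUntil_subset_support hm hz), hG.between_of_mem_support hq hm⟩
  intro z hz
  rw [Walk.support_reverse, List.mem_reverse] at hz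
  exact q.support_takeUntil_subset_support hm hz

lemma between_or_between (h : G.Between x c y) (p : V) : G.Between p c x ∨ G.Between p c y := by
  obtain ⟨n, hpnx, hpny, hxny⟩ := hG.exists_median p x y
  rcases hG.between_total hxny h with hxnc | hxcn
  · exact Or.inr (hpny.trans_right hG.connected (h.right_of_left hG.connected hxnc))
  · exact Or.inl (hpnx.trans_right hG.connected hxcn.symm)

lemma eq_of_between_of_dist_eq (hx : G.Between p x c) (hy : G.Between p y c)
    (h : G.dist x c = G.dist y c) : x = y := by
  apply hG.connected.dist_eq_zero_iff.mp
  rcases hG.between_total hx hy with hxy | hyx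
  · unfold Between at *; omega
  · rw [dist_comm]; unfold Between at *; omega

lemma between_of_dist_lt_add (hx : G.Between p x c) (hxc : G.dist x c = 1)
    (hpq : G.dist p q < G.dist p c + G.dist q c) : G.Between q x c := by
  obtain ⟨m, hcmp, hcmq, hpmq⟩ := hG.exists_median c p q
  have hmc : 0 < G.dist m c := by
    have := dist_comm (G := G) (u := m) (v := p)
    have := dist_comm (G := G) (u := c) (v := p)
    have := dist_comm (G := G) (u := c) (v := q)
    have := dist_comm (G := G) (u := c) (v := m)
    unfold Between at *; omega
  rcases hG.between_total hx hcmp.symm with hpxm | hpmx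
  · have hxmc := hcmp.symm.right_of_left hG.connected hpxm
    obtain rfl : x = m := hG.connected.dist_eq_zero_iff.mp (by unfold Between at hxmc; omega)
    exact hcmq.symm
  · exact hcmq.symm.trans_right hG.connected (hx.right_of_left hG.connected hpmx)

lemma between_of_adj (hxc : G.Adj x c) {k : ℕ} (hpx : G.dist p x ≤ k) (hpc : k ≤ G.dist p c) :
    G.Between p x c := by
  have := dist_eq_one_iff_adj.mpr hxc
  rcases hG.dist_eq_dist_add_one_of_adj p hxc with h | h <;> unfold Between <;> omega

end IsTree

lemma subset_span (G : SimpleGraph V) (A : Set V) : A ⊆ span G A :=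
  fun a ha => ⟨a, ha, a, ha, .nil, .nil, by simp⟩

lemma span_mono {A B : Set V} (h : A ⊆ B) : span G A ⊆ span G B := by
  rintro w ⟨a, ha, b, hb, q, hq, hw⟩
  exact ⟨a, h ha, b, h hb, q, hq, hw⟩

def IsDiametralPair (G : SimpleGraph V) (A : Set V) (x y : V) : Prop :=
  x ∈ A ∧ y ∈ A ∧ ∀ u ∈ A, ∀ w ∈ A, G.dist u w ≤ G.dist x y

lemma IsDiametralPair.symm {A : Set V} (h : G.IsDiametralPair A x y) :
    G.IsDiametralPair A y x :=
  ⟨h.2.1, h.1, fun u hu w hw => dist_comm (u := y) ▸ h.2.2 u hu w hw⟩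

section Eccentricity

variable {A : Set V} {B : ℕ}

lemma dist_le_setDiam (hA : ∀ u ∈ A, ∀ w ∈ A, G.dist u w ≤ B) (hu : u ∈ A)
    (hw : w ∈ A) :
    G.dist u w ≤ setDiam G A :=
  le_csSup ⟨B, by rintro d ⟨u, hu, w, hw, rfl⟩; exact hA u hu w hw⟩ ⟨u, hu, w, hw, rfl⟩

lemma exists_dist_eq_setDiam (hA : ∀ u ∈ A, ∀ w ∈ A, G.dist u w ≤ B) (hne : A.Nonempty) :
    ∃ u ∈ A, ∃ w ∈ A, G.dist u w = setDiam G A := by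
  obtain ⟨u, hu⟩ := hne
  exact Nat.sSup_mem (s := {d | ∃ u ∈ A, ∃ w ∈ A, G.dist u w = d})
    ⟨_, u, hu, u, hu, rfl⟩
    ⟨B, by rintro d ⟨u, hu, w, hw, rfl⟩; exact hA u hu w hw⟩

lemma nonempty_of_setDiam_ne_zero (h : setDiam G A ≠ 0) : A.Nonempty := by
  contrapose! h
  simp [setDiam, h]

lemma IsDiametralPair.setDiam_eq (h : G.IsDiametralPair A x y) : setDiam G A = G.dist x y :=
  le_antisymm
    (csSup_le ⟨_, x, h.1, y, h.2.1, rfl⟩ fun _ ⟨u, hu, w, hw, hd⟩ => hd ▸ h.2.2 u hu w hw)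
    (dist_le_setDiam h.2.2 h.1 h.2.1)

lemma mem_setCenter_of_forall {r : ℕ} (hA : ∀ u ∈ A, ∀ w ∈ A, G.dist u w ≤ B)
    (hv : v ∈ A) (hle : ∀ u ∈ A, G.dist v u ≤ r)
    (hge : ∀ w ∈ A, ∃ u ∈ A, r ≤ G.dist w u) :
    v ∈ setCenter G A := by
  have hecc (w) (hw : w ∈ A) : r ≤ setEcc G A w := by
    obtain ⟨u, hu, hr⟩ := hge w hw
    exact hr.trans
      (le_csSup ⟨B, by rintro d ⟨u, hu, rfl⟩; exact hA w hw u hu⟩ ⟨u, hu, rfl⟩)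
  have hv' : setEcc G A v = r := by
    refine le_antisymm ?_ (hecc v hv)
    exact csSup_le ⟨_, v, hv, rfl⟩ (by rintro d ⟨u, hu, rfl⟩; exact hle u hu)
  refine ⟨hv, hv'.trans (le_antisymm ?_ (hv' ▸ Nat.sInf_le ⟨v, hv, rfl⟩))⟩
  exact le_csInf ⟨_, v, hv, hv'⟩ (by rintro e ⟨w, hw, rfl⟩; exact hecc w hw)

end Eccentricity

namespace IsTree

variable (hG : G.IsTree) {A : Set V}
include hG

lemma mem_span_iff : w ∈ span G A ↔ ∃ a ∈ A, ∃ b ∈ A, G.Between a w b := by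
  constructor
  · rintro ⟨a, ha, b, hb, q, hq, hw⟩
    exact ⟨a, ha, b, hb, hG.between_of_mem_support hq hw⟩
  · rintro ⟨a, ha, b, hb, h⟩
    obtain ⟨q, hq, -⟩ := hG.connected.exists_path_of_dist a b
    exact ⟨a, ha, b, hb, q, hq, hG.mem_support_of_between h hq⟩

lemma exists_dist_le_of_mem_span (hw : w ∈ span G A) (p : V) :
    ∃ b ∈ A, G.dist p w ≤ G.dist p b := by
  obtain ⟨a, ha, b, hb, h⟩ := (hG.mem_span_iff).mp hw
  rcases hG.between_or_between h p with h' | h'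
  · exact ⟨a, ha, by unfold Between at h'; omega⟩
  · exact ⟨b, hb, by unfold Between at h'; omega⟩

lemma exists_isDiametralPair_span {B : ℕ} (hA : ∀ a ∈ A, ∀ b ∈ A, G.dist a b ≤ B)
    (hne : A.Nonempty) : ∃ x ∈ A, ∃ y ∈ A, G.IsDiametralPair (span G A) x y := by
  obtain ⟨x, hx, y, hy, hxy⟩ := exists_dist_eq_setDiam hA hne
  refine ⟨x, hx, y, hy, subset_span G A hx, subset_span G A hy, fun u hu w hw => ?_⟩
  obtain ⟨b, hb, hwb⟩ := hG.exists_dist_le_of_mem_span hw u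
  obtain ⟨a, ha, hba⟩ := hG.exists_dist_le_of_mem_span hu b
  calc G.dist u w ≤ G.dist b u := dist_comm (u := b) ▸ hwb
    _ ≤ G.dist b a := hba
    _ ≤ G.dist x y := hxy ▸ dist_le_setDiam hA hb ha

lemma mem_setCenter_of_between {S : Set V} (hxy : G.IsDiametralPair S x y) (hm : m ∈ S)
    (hxmy : G.Between x m y) (hxm : G.dist x m = (G.dist x y + 1) / 2) : m ∈ setCenter G S := by
  refine mem_setCenter_of_forall (r := (G.dist x y + 1) / 2) hxy.2.2 hm (fun u hu => ?_)
    (fun w _ => ?_)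
  · have hux := hxy.2.2 u hu x hxy.1
    have huy := hxy.2.2 u hu y hxy.2.1
    have := dist_comm (G := G) (u := u) (v := m)
    have := dist_comm (G := G) (u := m) (v := x)
    rcases hG.between_or_between hxmy u with h | h <;> unfold Between at * <;> omega
  · have := hG.connected.dist_triangle (u := x) (v := w) (w := y)
    have := dist_comm (G := G) (u := x) (v := w)
    by_cases h : (G.dist x y + 1) / 2 ≤ G.dist w x
    · exact ⟨x, hxy.1, h⟩
    · exact ⟨y, hxy.2.1, by omega⟩

lemma dist_le_one_or_dist_le_one (hD : G.dist x y ≤ 4)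
    (hxmy : G.Between x m y) (hxm : G.dist x m = (G.dist x y + 1) / 2)
    (hym'x : G.Between y m' x) (hym' : G.dist y m' = (G.dist x y + 1) / 2)
    (hcx : G.dist c x ≤ min 3 (G.dist x y)) (hcy : G.dist c y ≤ min 3 (G.dist x y)) :
    G.dist c m ≤ 1 ∨ G.dist c m' ≤ 1 := by
  obtain ⟨w, hcwx, hcwy, hxwy⟩ := hG.exists_median c x y
  have := hG.connected.dist_triangle (u := c) (v := w) (w := m)
  have := hG.connected.dist_triangle (u := c) (v := w) (w := m')
  have := dist_comm (G := G) (u := w) (v := m)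
  have := dist_comm (G := G) (u := w) (v := m')
  have := dist_comm (G := G) (u := x) (v := y)
  have := dist_comm (G := G) (u := x) (v := m')
  have := dist_comm (G := G) (u := w) (v := x)
  rcases hG.between_total hxwy hxmy with h | h <;>
    rcases hG.between_total hxwy hym'x.symm with h' | h' <;>
    · unfold Between at *; omega

lemma exists_mem_setCenter_span_dist_le_one (hA : ∀ a ∈ A, ∀ b ∈ A, G.dist a b ≤ 4)
    (hne : A.Nonempty) (hc : c ∈ span G A) (hcA : ∀ a ∈ A, G.dist c a ≤ 3) :
    ∃ c' ∈ setCenter G (span G A), G.dist c c' ≤ 1 := by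
  obtain ⟨x, hx, y, hy, hxy⟩ := hG.exists_isDiametralPair_span hA hne
  have hyx : G.dist y x = G.dist x y := dist_comm
  obtain ⟨m, hxm, hxmy⟩ := hG.connected.exists_between_dist_eq (a := x) (b := y)
    (t := (G.dist x y + 1) / 2) (by omega)
  obtain ⟨m', hym', hym'x⟩ := hG.connected.exists_between_dist_eq (a := y) (b := x)
    (t := (G.dist x y + 1) / 2) (by omega)
  have hm := hG.mem_setCenter_of_between hxy ((hG.mem_span_iff).mpr ⟨x, hx, y, hy, hxmy⟩)
    hxmy hxm
  have hm' := hG.mem_setCenter_of_between hxy.symm ((hG.mem_span_iff).mpr ⟨y, hy, x, hx, hym'x⟩)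
    hym'x (hyx ▸ hym')
  have hcD (a) (ha : a ∈ A) : G.dist c a ≤ min 3 (G.dist x y) :=
    le_min (hcA a ha) (hxy.2.2 c hc a (subset_span G A ha))
  rcases hG.dist_le_one_or_dist_le_one (hA x hx y hy) hxmy hxm hym'x hym' (hcD x hx) (hcD y hy)
    with h | h
  exacts [⟨m, hm, h⟩, ⟨m', hm', h⟩]

lemma dist_le_of_between (h : G.Between x c y) (hxc : G.dist x c = 1) (hcy : G.dist c y = 1)
    {k : ℕ} (hx : G.dist p x ≤ k + 1) (hy : G.dist p y ≤ k + 1) : G.dist c p ≤ k := by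
  have := dist_comm (G := G) (u := c) (v := p)
  have := dist_comm (G := G) (u := c) (v := x)
  rcases hG.between_or_between h p with h' | h' <;> unfold Between at h' <;> omega

end IsTree

lemma Connected.dist_le_one_iff (hG : G.Connected) : G.dist u v ≤ 1 ↔ v = u ∨ G.Adj u v := by
  rw [Nat.le_one_iff_eq_zero_or_eq_one, hG.dist_eq_zero_iff, dist_eq_one_iff_adj, eq_comm]

section Separator

variable {S : Set V} {t : V}

def ReachableAvoiding (G : SimpleGraph V) (S : Set V) (u v : V) : Prop :=
  ∃ q : G.Walk u v, ∀ t ∈ q.support, t ∉ S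

lemma ReachableAvoiding.symm (h : G.ReachableAvoiding S u v) : G.ReachableAvoiding S v u := by
  obtain ⟨q, hq⟩ := h
  exact ⟨q.reverse, fun t ht => hq t (by simpa using ht)⟩

lemma ReachableAvoiding.trans (h₁ : G.ReachableAvoiding S u v)
    (h₂ : G.ReachableAvoiding S v w) :
    G.ReachableAvoiding S u w := by
  obtain ⟨q₁, hq₁⟩ := h₁
  obtain ⟨q₂, hq₂⟩ := h₂
  refine ⟨q₁.append q₂, fun t ht => ?_⟩
  rcases (Walk.mem_support_append_iff _ _).mp ht with ht | ht
  exacts [hq₁ t ht, hq₂ t ht]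

lemma ReachableAvoiding.concat (h : G.ReachableAvoiding S u v) (hvw : G.Adj v w) (hw : w ∉ S) :
    G.ReachableAvoiding S u w := by
  obtain ⟨q, hq⟩ := h
  refine ⟨q.concat hvw, fun t ht => ?_⟩
  rw [Walk.support_concat, List.mem_append, List.mem_singleton] at ht
  rcases ht with ht | rfl
  exacts [hq t ht, hw]

lemma ReachableAvoiding.of_mem_support {q : G.Walk u v} (hq : ∀ t ∈ q.support, t ∉ S)
    (ht : t ∈ q.support) : G.ReachableAvoiding S u t := by
  classical
  exact ⟨q.takeUntil t ht, fun z hz => hq z (q.support_takeUntil_subset_support ht hz)⟩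

lemma Walk.exists_adj_reachableAvoiding (q : G.Walk u v) (hu : u ∉ S)
    (hq : ∃ w ∈ q.support, w ∈ S) :
    ∃ s ∈ q.support, s ∈ S ∧ ∃ b, G.Adj b s ∧ G.ReachableAvoiding S u b := by
  induction q with
  | nil =>
    obtain ⟨w, hw, hwS⟩ := hq
    rw [Walk.support_nil, List.mem_singleton] at hw
    exact absurd (hw ▸ hwS) hu
  | @cons u a v hua q ih =>
    by_cases ha : a ∈ S
    · exact ⟨a, by simp, ha, u, hua, .nil, by simpa using hu⟩
    · obtain ⟨w, hw, hwS⟩ := hq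
      have hw' : w ∈ q.support := by
        rcases List.mem_cons.mp hw with rfl | hw
        exacts [absurd hwS hu, hw]
      obtain ⟨s, hs, hsS, b, hbs, hab⟩ := ih ha ⟨w, hw', hwS⟩
      exact ⟨s, by simp [hs], hsS, b, hbs, (hab.symm.concat hua.symm hu).symm⟩

end Separator

end SimpleGraph

open SimpleGraph

section SteinerRoot

variable {α β : Type*} {G : SimpleGraph α} {T : SimpleGraph β} {f : α → β} {S : Set α}
  {s a u v : α}

lemma IsUVSep.symm (h : IsUVSep G S u v) : IsUVSep G S v u := by
  refine ⟨h.2.1, h.1, fun q => ?_⟩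
  obtain ⟨w, hw, hwS⟩ := h.2.2 q.reverse
  exact ⟨w, by simpa using hw, hwS⟩

lemma IsUVSep.not_reachableAvoiding (h : IsUVSep G S u v) : ¬ G.ReachableAvoiding S u v :=
  fun ⟨q, hq⟩ => let ⟨w, hw, hwS⟩ := h.2.2 q; hq w hw hwS

lemma IsUVSep.exists_adj_reachableAvoiding (h : IsUVSep G S u v)
    (hmin : ∀ S' ⊂ S, ¬ IsUVSep G S' u v) (hs : s ∈ S) :
    ∃ b, G.Adj b s ∧ G.ReachableAvoiding S u b := by
  obtain ⟨q, hq⟩ : ∃ q : G.Walk u v, ∀ w ∈ q.support, w ∈ S → w = s := by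
    have := hmin _ (Set.sdiff_singleton_ssubset.mpr hs)
    simp only [IsUVSep, not_and, not_forall, not_exists] at this
    obtain ⟨q, hq⟩ := this (fun h' => h.1 h'.1) (fun h' => h.2.1 h'.1)
    exact ⟨q, fun w hw hwS => by_contra fun hws => hq w hw ⟨hwS, hws⟩⟩
  obtain ⟨s', hs'q, hs'S, b, hbs', hub⟩ := q.exists_adj_reachableAvoiding h.1 (h.2.2 q)
  obtain rfl := hq s' hs'q hs'S
  exact ⟨b, hbs', hub⟩

lemma IsCliqueIntersection.isClique {X : Set α} (hX : IsCliqueIntersection G X) :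
    G.IsClique X := by
  obtain ⟨𝒦, ⟨K, hK⟩, hmax, rfl⟩ := hX
  exact (hmax K hK).1.subset (Set.sInter_subset_of_mem hK)

lemma IsSteinerRoot.dist_le_of_isClique {k : ℕ} (hroot : IsSteinerRoot k G T f) {X : Set α}
    (hX : G.IsClique X) : ∀ x ∈ f '' X, ∀ y ∈ f '' X, T.dist x y ≤ k := by
  rintro _ ⟨a, ha, rfl⟩ _ ⟨b, hb, rfl⟩
  rcases eq_or_ne a b with rfl | hab
  · simp
  · exact (hroot.2.2 a b hab).mp (hX ha hb hab)

lemma SimpleGraph.IsTree.between_of_walk (hT : T.IsTree) {k : ℕ} (hk : 0 < k)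
    (hf : ∀ a b, G.Adj a b → T.dist (f a) (f b) ≤ k) {x c : β} (hxc : T.dist x c = 1)
    {b₁ b₂ : α} (q : G.Walk b₁ b₂) (hfar : ∀ t ∈ q.support, k ≤ T.dist (f t) c)
    (h : T.Between (f b₁) x c) : T.Between (f b₂) x c := by
  induction q with
  | nil => exact h
  | @cons b₁ a b₂ hadj q ih =>
    refine ih (fun t ht => hfar t (by simp [ht])) (hT.between_of_dist_lt_add h hxc ?_)
    have := hf _ _ hadj
    have := hfar b₁ (by simp)
    have := hfar a (by simp)
    omega

lemma IsSteinerRoot.reachableAvoiding_of_dist_le_one (hroot : IsSteinerRoot 4 G T f)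
    {w₀ s₁ s₂ : α} {c : β}
    (hfull : ∀ s ∈ S, ∃ b, G.Adj b s ∧ G.ReachableAvoiding S w₀ b)
    (hs₁ : s₁ ∈ S) (hs₂ : s₂ ∈ S) (h₁ : T.Adj (f s₁) c) (h₂ : T.Adj (f s₂) c)
    (hne : f s₁ ≠ f s₂) (ha : a ∉ S) (hca : T.dist c (f a) ≤ 1) :
    G.ReachableAvoiding S w₀ a := by
  obtain ⟨-, hT, hiff⟩ := hroot
  by_cases hnear : ∃ z, G.ReachableAvoiding S w₀ z ∧ T.dist (f z) c ≤ 3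
  · obtain ⟨z, hz, hzc⟩ := hnear
    rcases eq_or_ne z a with rfl | hza
    · exact hz
    · have := hT.connected.dist_triangle (u := f z) (v := c) (w := f a)
      exact hz.concat ((hiff z a hza).mpr (by omega)) ha
  -- otherwise the component lies in a single branch of `T` at `c`
  push Not at hnear
  have hbranch {b s : α} (hbs : G.Adj b s) (hb : G.ReachableAvoiding S w₀ b)
      (hsc : T.Adj (f s) c) : T.Between (f b) (f s) c :=
    hT.between_of_adj hsc ((hiff b s hbs.ne).mp hbs) (hnear b hb)
  have hwalk {b : α} {q : G.Walk w₀ b} (hq : ∀ t ∈ q.support, t ∉ S) :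
      ∀ t ∈ q.support, 4 ≤ T.dist (f t) c :=
    fun t ht => hnear t (.of_mem_support hq ht)
  have hf (a b : α) (hab : G.Adj a b) : T.dist (f a) (f b) ≤ 4 := (hiff a b hab.ne).mp hab
  have hxc := dist_eq_one_iff_adj.mpr h₁
  obtain ⟨b₁, hb₁s, q₁, hq₁⟩ := hfull s₁ hs₁
  obtain ⟨b₂, hb₂s, q₂, hq₂⟩ := hfull s₂ hs₂
  have hw₀ := hT.between_of_walk (by norm_num) hf hxc q₁.reverse
    (fun t ht => hwalk hq₁ t (by simpa using ht)) (hbranch hb₁s ⟨q₁, hq₁⟩ h₁)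
  have hb₂ := hT.between_of_walk (by norm_num) hf hxc q₂ (hwalk hq₂) hw₀
  exact absurd (hT.eq_of_between_of_dist_eq hb₂ (hbranch hb₂s ⟨q₂, hq₂⟩ h₂)
    (hxc.trans (dist_eq_one_iff_adj.mpr h₂).symm)) hne

lemma IsSteinerRoot.mem_of_dist_le_one (hroot : IsSteinerRoot 4 G T f) (hS : IsMinSep G S)
    {s₁ s₂ : α} {c : β} (hs₁ : s₁ ∈ S) (hs₂ : s₂ ∈ S) (h₁ : T.Adj (f s₁) c)
    (h₂ : T.Adj (f s₂) c) (hne : f s₁ ≠ f s₂) (hca : T.dist c (f a) ≤ 1) : a ∈ S := by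
  obtain ⟨u, v, -, -, hsep, hmin⟩ := hS
  by_contra ha
  have hu := hroot.reachableAvoiding_of_dist_le_one
    (fun s hs => hsep.exists_adj_reachableAvoiding hmin hs) hs₁ hs₂ h₁ h₂ hne ha hca
  have hv := hroot.reachableAvoiding_of_dist_le_one
    (fun s hs => hsep.symm.exists_adj_reachableAvoiding (fun S' h h' => hmin S' h h'.symm) hs)
    hs₁ hs₂ h₁ h₂ hne ha hca
  exact hsep.not_reachableAvoiding (hu.trans hv.symm)

lemma closedNeighborhood_inter_range_eq (hT : T.Connected) {c : β}
    (h : ∀ a, T.dist c (f a) ≤ 1 ↔ a ∈ S) :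
    {w | w = c ∨ T.Adj c w} ∩ Set.range f = f '' S := by
  ext w
  constructor
  · rintro ⟨hw, a, rfl⟩
    exact ⟨a, (h a).mp (hT.dist_le_one_iff.mpr hw), rfl⟩
  · rintro ⟨a, ha, rfl⟩
    exact ⟨hT.dist_le_one_iff.mp ((h a).mpr ha), a, rfl⟩

end SteinerRoot

theorem stmt15_general {α β : Type*}
    (G : SimpleGraph α) (T : SimpleGraph β) (f : α → β)
    (hroot : IsSteinerRoot 4 G T f) (X S : Set α)
    (hX : IsCliqueIntersection G X) (hS : IsMinSep G S) (hsub : S ⊂ X)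
    (hd : setDiam T (span T (f '' S)) = 2) :
    ∃ c : β, c ∈ setCenter T (span T (f '' S)) ∧
      (∃ c' ∈ setCenter T (span T (f '' X)), T.dist c c' ≤ 1) ∧
      {w | w = c ∨ T.Adj c w} ∩ Set.range f = f '' S := by
  have hT := hroot.2.1
  have hX4 := hroot.dist_le_of_isClique hX.isClique
  have hSX : f '' S ⊆ f '' X := Set.image_mono hsub.1
  have hS4 : ∀ x ∈ f '' S, ∀ y ∈ f '' S, T.dist x y ≤ 4 :=
    fun x hx y hy => hX4 x (hSX hx) y (hSX hy)
  obtain ⟨-, a, ha, -⟩ := nonempty_of_setDiam_ne_zero (hd ▸ two_ne_zero)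
  obtain ⟨x, hx, y, hy, hxy⟩ := hT.exists_isDiametralPair_span hS4 ⟨a, ha⟩
  have hD : T.dist x y = 2 := hxy.setDiam_eq ▸ hd
  obtain ⟨c, hxc, hxcy⟩ :=
    hT.connected.exists_between_dist_eq (a := x) (b := y) (t := 1) (by omega)
  have hcy : T.dist c y = 1 := by unfold Between at hxcy; omega
  have hcS := hT.mem_setCenter_of_between hxy ((hT.mem_span_iff).mpr ⟨x, hx, y, hy, hxcy⟩) hxcy
    (by omega)
  refine ⟨c, hcS, hT.exists_mem_setCenter_span_dist_le_one hX4 ⟨a, hSX ha⟩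
    (span_mono hSX hcS.1) fun w hw => hT.dist_le_of_between hxcy hxc hcy
      (hX4 w hw x (hSX hx)) (hX4 w hw y (hSX hy)), ?_⟩
  obtain ⟨s₁, hs₁, rfl⟩ := hx
  obtain ⟨s₂, hs₂, rfl⟩ := hy
  refine closedNeighborhood_inter_range_eq hT.connected fun a => ⟨fun ha => ?_, fun ha => ?_⟩
  · exact hroot.mem_of_dist_le_one hS hs₁ hs₂ (dist_eq_one_iff_adj.mp hxc)
      (dist_eq_one_iff_adj.mp (SimpleGraph.dist_comm ▸ hcy)) (fun h => by simp [h] at hD) ha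
  · have hfa := subset_span T _ (Set.mem_image_of_mem f ha)
    exact hT.dist_le_of_between hxcy hxc hcy (hD ▸ hxy.2.2 _ hfa _ hxy.1 :)
      (hD ▸ hxy.2.2 _ hfa _ hxy.2.1 :)

/-- If `T` is a `4`-Steiner root of `G`, `S ⊊ X` is a minimal separator
strictly contained in a clique-intersection `X`, and `T⟨S⟩` is a non-edge
star (diameter 2), then the center `c` of `T⟨S⟩` is at distance at most `1`
from the center of `T⟨X⟩` and satisfies `Real(N_T[c]) = S`. -/
theorem stmt15 {α β : Type*} [Fintype α] [Fintype β]
    (G : SimpleGraph α) (hG : G.Connected) (T : SimpleGraph β) (f : α → β)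
    (hroot : IsSteinerRoot 4 G T f) (X S : Set α)
    (hX : IsCliqueIntersection G X) (hS : IsMinSep G S) (hsub : S ⊂ X)
    (hd : setDiam T (span T (f '' S)) = 2) :
    ∃ c : β, c ∈ setCenter T (span T (f '' S)) ∧
      (∃ c' ∈ setCenter T (span T (f '' X)), T.dist c c' ≤ 1) ∧
      {w | w = c ∨ T.Adj c w} ∩ Set.range f = f '' S :=
  stmt15_general G T f hroot X S hX hS hsub hd
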